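/- Let R be a commutative Noetherian ring and M a finitely generated module with finite projective dimension. If M has Gorenstein dimension 0 (i.e., M is reflexive and Ext^i(M,R) = Ext^i(M*,R) = 0 for all i ≥ 1), then M is projective. -/

import Mathlib

open CategoryTheory

universe u

variable (R : Type u) [CommRing R]

/-- The `i`-th Ext module of two modules, as an object of `ModuleCat R`. -/
noncomputable def extM (M N : ModuleCat.{u} R) (i : ℕ) : ModuleCat.{u} R :=
  ((Ext R (ModuleCat.{u} R) i).obj (Opposite.op M)).obj N

/-- `D` is an Auslander dual of `M`: `D ≅ Coker(u* : P0* → P1*)` for some finite projective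
presentation `P1 →u P0 → M → 0`. -/
def IsAuslanderDual (M D : ModuleCat.{u} R) : Prop :=
  ∃ (P1 P0 : ModuleCat.{u} R) (uu : P1 →ₗ[R] P0) (f : P0 →ₗ[R] M),
    Module.Finite R P1 ∧ Module.Projective R P1 ∧
    Module.Finite R P0 ∧ Module.Projective R P0 ∧
    Function.Surjective f ∧ Function.Exact uu f ∧
    Nonempty (D ≃ₗ[R] (Module.Dual R P1 ⧸ LinearMap.range uu.dualMap))

/-- Gorenstein dimension zero: reflexive with all positive Ext of `M` and `M*` into `R`
vanishing. -/
def GdimZero (M : ModuleCat.{u} R) : Prop :=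
  Module.IsReflexive R M ∧ ∀ i : ℕ, 1 ≤ i →
    Subsingleton (extM R M (ModuleCat.of R R) i) ∧
    Subsingleton (extM R (ModuleCat.of R (Module.Dual R M)) (ModuleCat.of R R) i)

/-- `GdimLE R k M` : the Gorenstein dimension of `M` is at most `k`. -/
def GdimLE : ℕ → ModuleCat.{u} R → Prop
  | 0, M => GdimZero R M
  | (k+1), M => ∃ (N : ModuleCat.{u} R) (f : N →ₗ[R] M),
      Function.Surjective f ∧ GdimZero R N ∧
      GdimLE k (ModuleCat.of R (LinearMap.ker f))

/-- The Gorenstein dimension, as an extended natural number. -/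
noncomputable def gdim (M : ModuleCat.{u} R) : ℕ∞ :=
  sInf {n : ℕ∞ | ∃ k : ℕ, n = k ∧ GdimLE R k M}

/-- `PdLE R k M` : projective dimension at most `k` (via finite projective resolutions). -/
def PdLE : ℕ → ModuleCat.{u} R → Prop
  | 0, M => Module.Projective R M
  | (k+1), M => ∃ (P : ModuleCat.{u} R) (f : P →ₗ[R] M),
      Module.Finite R P ∧ Module.Projective R P ∧ Function.Surjective f ∧
      PdLE k (ModuleCat.of R (LinearMap.ker f))

noncomputable def pd (M : ModuleCat.{u} R) : ℕ∞ :=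
  sInf {n : ℕ∞ | ∃ k : ℕ, n = k ∧ PdLE R k M}

/-- `M` is a `k`-th syzygy: there is an exact sequence `0 → M → P₀ → ⋯ → P_{k-1}` with all
`P_j` finitely generated projective. -/
def IsSyzygy : ℕ → ModuleCat.{u} R → Prop
  | 0, _ => True
  | (k+1), M => ∃ (P : ModuleCat.{u} R) (f : M →ₗ[R] P),
      Module.Finite R P ∧ Module.Projective R P ∧ Function.Injective f ∧
      IsSyzygy k (ModuleCat.of R (P ⧸ LinearMap.range f))

/-- `M` is `k`-torsionless: `Ext^i(D(M), R) = 0` for `1 ≤ i ≤ k`. -/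
def Torsionless (k : ℕ) (M : ModuleCat.{u} R) : Prop :=
  ∃ D : ModuleCat.{u} R, IsAuslanderDual R M D ∧
    ∀ i : ℕ, 1 ≤ i → i ≤ k → Subsingleton (extM R D (ModuleCat.of R R) i)

/-- The depth of a module over a local ring, via vanishing of `Ext^i(k, M)`. -/
noncomputable def rdepth (A : Type u) [CommRing A] [IsLocalRing A] (N : ModuleCat.{u} A) : ℕ∞ :=
  sInf {n : ℕ∞ | ∃ i : ℕ, n = i ∧
    ¬ Subsingleton (extM A (ModuleCat.of A (IsLocalRing.ResidueField A)) N i)}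

/-- Injective dimension at most `k`. -/
def IdLE : ℕ → ModuleCat.{u} R → Prop
  | 0, M => Module.Injective R M
  | (k+1), M => ∃ (I : ModuleCat.{u} R) (f : M →ₗ[R] I),
      Module.Injective R I ∧ Function.Injective f ∧
      IdLE k (ModuleCat.of R (I ⧸ LinearMap.range f))


/-!
Induct on the length of a finite projective resolution. Given `0 → K → P → M → 0` with `P`
finite projective, splicing a projective resolution of `K` onto `P` shows
`Ext^{j+1}(K, R) ≅ Ext^{j+2}(M, R) = 0`, so `K` is projective by induction; it is finitely generated
since `R` is Noetherian. Moreover `Ext^1(M, R) = 0` says that every functional on `K` extends to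
`P`. As `K` is a direct summand of some `R^m`, the inclusion `K → P` then has a retraction, so the
sequence splits and `M` is a direct summand of `P`.
-/

open CategoryTheory.Limits

lemma ChainComplex.quasiIsoAt_zero_toSingle₀Equiv_symm_iff {C : Type*} [Category C] [Abelian C]
    {K : ChainComplex C ℕ} {X : C} (g : K.X 0 ⟶ X) (hg : K.d 1 0 ≫ g = 0) :
    QuasiIsoAt ((K.toSingle₀Equiv X).symm ⟨g, hg⟩) 0 ↔ (ShortComplex.mk _ _ hg).Exact ∧ Epi g := by
  rw [ChainComplex.quasiIsoAt₀_iff,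
    ShortComplex.quasiIso_iff_of_zeros' _ (K.shape _ _ (by simp)) rfl rfl]
  simp only [HomologicalComplex.shortComplexFunctor'_map_τ₂,
    ChainComplex.toSingle₀Equiv_symm_apply_f_zero]
  rfl

namespace CategoryTheory.ProjectiveResolution

variable {C : Type*} [Category C] [Abelian C]

section Augmentation

variable {X : C} (Q : ProjectiveResolution X)

/-- `Q.π.f 0`, retyped with target `X` rather than the degree-zero object of `single₀ X`. -/
noncomputable def augmentation : Q.complex.X 0 ⟶ X := Q.π.f 0

@[simp]
lemma d_comp_augmentation : Q.complex.d 1 0 ≫ Q.augmentation = 0 :=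
  Q.complex_d_comp_π_f_zero

@[simp]
lemma d_comp_augmentation_comp {Y : C} (g : X ⟶ Y) : Q.complex.d 1 0 ≫ Q.augmentation ≫ g = 0 := by
  rw [← Category.assoc, d_comp_augmentation, zero_comp]

instance : Epi Q.augmentation := inferInstanceAs (Epi (Q.π.f 0))

lemma exact_augmentation_comp_mono {Y : C} (i : X ⟶ Y) [Mono i] :
    (ShortComplex.mk (Q.complex.d 1 0) (Q.augmentation ≫ i) (by simp)).Exact :=
  (ShortComplex.exact_iff_of_epi_of_isIso_of_mono
    (S₁ := ShortComplex.mk _ _ Q.d_comp_augmentation)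
    (S₂ := ShortComplex.mk (Q.complex.d 1 0) (Q.augmentation ≫ i) (by simp))
    { τ₁ := 𝟙 _, τ₂ := 𝟙 _, τ₃ := i, comm₁₂ := by simp, comm₂₃ := by simp }).1 Q.exact₀

end Augmentation

/-- The projective resolution `⋯ → Q₁ → Q₀ → S.X₂ → S.X₃` obtained from `Q → S.X₁ → S.X₂`. -/
noncomputable def splice {S : ShortComplex C} (hS : S.ShortExact) [Projective S.X₂]
    (Q : ProjectiveResolution S.X₁) : ProjectiveResolution S.X₃ where
  complex := Q.complex.augment (Q.augmentation ≫ S.f) (by simp)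
  projective
    | 0 => ‹Projective S.X₂›
    | n + 1 => Q.projective n
  π := (ChainComplex.toSingle₀Equiv _ _).symm
    ⟨S.g, (Category.assoc _ _ _).trans ((Q.augmentation ≫= S.zero).trans comp_zero)⟩
  quasiIso := ⟨fun n => by
    have := hS.mono_f
    cases n with
    | zero =>
      refine (ChainComplex.quasiIsoAt_zero_toSingle₀Equiv_symm_iff _ _).2 ⟨?_, hS.epi_g⟩
      exact (ShortComplex.exact_iff_of_epi_of_isIso_of_mono (S₂ := S)
        (S₁ := ShortComplex.mk (Q.augmentation ≫ S.f) S.g (by simp))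
        { τ₁ := Q.augmentation, τ₂ := 𝟙 _, τ₃ := 𝟙 _, comm₁₂ := by simp, comm₂₃ := by simp }).2
        hS.exact
    | succ n =>
      rw [quasiIsoAt_iff_exactAt' _ _ (ChainComplex.exactAt_succ_single_obj _ _)]
      cases n with
      | zero =>
        rw [HomologicalComplex.exactAt_iff' _ 2 1 0 (by simp) (by simp)]
        exact Q.exact_augmentation_comp_mono S.f
      | succ n =>
        rw [HomologicalComplex.exactAt_iff' _ (n + 3) (n + 2) (n + 1) (by simp) (by simp)]
        exact Q.exact_succ n⟩

end CategoryTheory.ProjectiveResolution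

namespace CategoryTheory.ShortComplex.ShortExact

variable {C : Type*} [Category C] [Abelian C] [EnoughProjectives C]
  (A : Type*) [Ring A] [Linear A C] {S : ShortComplex C} [Projective S.X₂]

noncomputable def extSuccSuccIso (hS : S.ShortExact) (Y : C) (n : ℕ) :
    ((Ext A C (n + 2)).obj (Opposite.op S.X₃)).obj Y ≅
      ((Ext A C (n + 1)).obj (Opposite.op S.X₁)).obj Y :=
  let Q := ProjectiveResolution.of S.X₁
  -- in these degrees the Hom-complexes of `Q.splice hS` and of `Q` agree on the nose
  (Q.splice hS).isoExt (n + 2) Y ≪≫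
    ((Q.splice hS).complex.linearYonedaObj A Y).homologyIsoSc' (n + 1) (n + 2) (n + 3)
      (by simp) (by simp) ≪≫
    ((Q.complex.linearYonedaObj A Y).homologyIsoSc' n (n + 1) (n + 2) (by simp) (by simp)).symm ≪≫
    (Q.isoExt (n + 1) Y).symm

lemma exists_comp_eq_of_isZero_ext_one (hS : S.ShortExact) {Y : C}
    (hY : IsZero (((Ext A C 1).obj (Opposite.op S.X₃)).obj Y)) (g : S.X₁ ⟶ Y) :
    ∃ g' : S.X₂ ⟶ Y, S.f ≫ g' = g := by
  let Q := ProjectiveResolution.of S.X₁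
  let D := (Q.splice hS).complex.linearYonedaObj A Y
  have hD : (D.sc' 0 1 2).Exact := by
    rw [← HomologicalComplex.exactAt_iff' D 0 1 2 (by simp) (by simp),
      HomologicalComplex.exactAt_iff_isZero_homology]
    exact hY.of_iso ((Q.splice hS).isoExt 1 Y).symm
  obtain ⟨g', hg'⟩ := (ShortComplex.moduleCat_exact_iff _).1 hD
    (Q.augmentation ≫ g : Q.complex.X 0 ⟶ Y)
    (Q.d_comp_augmentation_comp g)
  exact ⟨g', (cancel_epi Q.augmentation).1 ((Category.assoc _ _ _).symm.trans hg')⟩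

end CategoryTheory.ShortComplex.ShortExact

theorem LinearMap.exists_leftInverse_of_forall_extend {A K P : Type*} [Ring A]
    [AddCommGroup K] [Module A K] [Module.Finite A K] [Module.Projective A K]
    [AddCommGroup P] [Module A P] (i : K →ₗ[A] P)
    (hext : ∀ φ : K →ₗ[A] A, ∃ ψ : P →ₗ[A] A, ψ ∘ₗ i = φ) :
    ∃ r : P →ₗ[A] K, r ∘ₗ i = LinearMap.id := by
  obtain ⟨m, p, hp⟩ := Module.Finite.exists_fin' A K
  obtain ⟨s, hs⟩ := Module.projective_lifting_property p LinearMap.id hp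
  choose ψ hψ using fun j : Fin m ↦ hext (LinearMap.proj j ∘ₗ s)
  have hψs : LinearMap.pi ψ ∘ₗ i = s := by
    ext x j
    exact LinearMap.congr_fun (hψ j) x
  exact ⟨p ∘ₗ LinearMap.pi ψ, by rw [LinearMap.comp_assoc, hψs, hs]⟩

theorem Module.Projective.of_exact_of_leftInverse {A K P M : Type*} [Ring A]
    [AddCommGroup K] [Module A K] [AddCommGroup P] [Module A P] [Module.Projective A P]
    [AddCommGroup M] [Module A M] {i : K →ₗ[A] P} {f : P →ₗ[A] M}
    (hex : Function.Exact i f) (hf : Function.Surjective f)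
    {r : P →ₗ[A] K} (hr : r ∘ₗ i = LinearMap.id) : Module.Projective A M := by
  obtain ⟨-, s, hs⟩ :=
    (hex.split_tfae'.out 1 0).1 (⟨hf, r, hr⟩ : _ ∧ ∃ l, l ∘ₗ i = LinearMap.id)
  exact .of_split s f hs

theorem projective_of_pdLE_of_isZero_ext [IsNoetherianRing R] {n : ℕ} {M : ModuleCat.{u} R}
    (hpd : PdLE R n M) (hext : ∀ j, 1 ≤ j → IsZero (extM R M (.of R R) j)) :
    Module.Projective R M := by
  induction n generalizing M with
  | zero => exact hpd
  | succ n ih =>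
    obtain ⟨P, f, _, _, hf, hK⟩ := hpd
    have hS := LinearMap.shortExact_shortComplexKer hf
    have hextK : ∀ j, 1 ≤ j → IsZero (extM R (.of R (LinearMap.ker f)) (.of R R) j) := by
      rintro (_ | j) hj
      · omega
      exact (hext (j + 2) (by omega)).of_iso (hS.extSuccSuccIso R (.of R R) j).symm
    have : Module.Projective R (LinearMap.ker f) := ih hK hextK
    obtain ⟨r, hr⟩ := (LinearMap.ker f).subtype.exists_leftInverse_of_forall_extend fun φ ↦ by
      obtain ⟨ψ, hψ⟩ := hS.exists_comp_eq_of_isZero_ext_one R (hext 1 le_rfl) (ModuleCat.ofHom φ)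
      exact ⟨ψ.hom, congrArg ModuleCat.Hom.hom hψ⟩
    exact .of_exact_of_leftInverse (LinearMap.exact_subtype_ker_map f) hf hr

theorem projective_of_gdimZero_of_finite_pd_general
    (R : Type u) [CommRing R] [IsNoetherianRing R]
    (M : ModuleCat.{u} R)
    (hpd : ∃ n : ℕ, PdLE R n M) (hG : GdimZero R M) :
    Module.Projective R M := by
  obtain ⟨n, hn⟩ := hpd
  exact projective_of_pdLE_of_isZero_ext R hn fun j hj ↦
    ModuleCat.isZero_iff_subsingleton.2 (hG.2 j hj).1

/-- A module of finite projective dimension and Gorenstein dimension zero is projective. -/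
theorem projective_of_gdimZero_of_finite_pd
    (R : Type u) [CommRing R] [IsNoetherianRing R]
    (M : ModuleCat.{u} R) [Module.Finite R M]
    (hpd : ∃ n : ℕ, PdLE R n M) (hG : GdimZero R M) :
    Module.Projective R M :=
  projective_of_gdimZero_of_finite_pd_general R M hpd hG
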